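/- arXiv:2510.23517 — 2 statements merged into one kernel-verified Lean document; each statement's English description precedes it below -/
import Mathlib

section
/- In L = Set^{[R]} with Day convolution tensor, for an object E the following are equivalent: (1) E lies in the Drinfeld center of L, i.e. E admits a natural family of isomorphisms θ_A : E ⊗ A ≅ A ⊗ E satisfying θ_{A⊗B} = (θ_A ⊗ id);(id ⊗ θ_B); (2) E is resource-free: E(l) = ∅ for every non-empty list l; (3) there exists a morphism E → I. -/
/- Shared preamble: the presheaf category L = Set^{[R]} over the discrete
   monoidal category of lists of naturals under concatenation, with the Day
   convolution tensor, described concretely. -/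

namespace LDay

/-- Objects of L = Set^{[R]}: families of sets indexed by lists of resource
    names (the base category is discrete, so no action on morphisms). -/
abbrev Obj : Type 1 := List ℕ → Type

/-- Morphisms of L. -/
abbrev Hom (A B : Obj) : Type := ∀ l, A l → B l

def idH (A : Obj) : Hom A A := fun _ a => a

def comp {A B C : Obj} (f : Hom A B) (g : Hom B C) : Hom A C :=
  fun l a => g l (f l a)

/-- Day convolution tensor: (A ⊗ B)(l) = Σ_{l₁ ++ l₂ = l} A(l₁) × B(l₂). -/
structure DayT (A B : Obj) (l : List ℕ) : Type where
  l₁ : List ℕ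
  l₂ : List ℕ
  eq : l₁ ++ l₂ = l
  a : A l₁
  b : B l₂

def Day (A B : Obj) : Obj := fun l => DayT A B l

def dayMap {A A' B B' : Obj} (f : Hom A A') (g : Hom B B') :
    Hom (Day A B) (Day A' B') :=
  fun _ d => ⟨d.l₁, d.l₂, d.eq, f d.l₁ d.a, g d.l₂ d.b⟩

/-- The unit I: indicator of the empty list. -/
def Iobj : Obj := fun l => PLift (l = [])

/-- The terminal presheaf [R], [R](l) = {l}. -/
def Full : Obj := fun _ => PUnit

/-- The presheaf of resources: R(l) = {n} if l = [n], ∅ otherwise. -/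
def Rp : Obj := fun l => { n : ℕ // l = [n] }

/-- Left internal hom: (A ⊸ B)(l₂) = ∀ l₁, A(l₁) → B(l₁ ++ l₂). -/
def lhom (A B : Obj) : Obj := fun l₂ => ∀ l₁, A l₁ → B (l₁ ++ l₂)

/-- Right internal hom: (A ⊸_r B)(l₁) = ∀ l₂, A(l₂) → B(l₁ ++ l₂). -/
def rhom (A B : Obj) : Obj := fun l₁ => ∀ l₂, A l₂ → B (l₁ ++ l₂)

def lhomMap {A B B' : Obj} (g : Hom B B') : Hom (lhom A B) (lhom A B') :=
  fun _ k l₁ a => g _ (k l₁ a)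

def rhomMap {A B B' : Obj} (g : Hom B B') : Hom (rhom A B) (rhom A B') :=
  fun _ k l₂ a => g _ (k l₂ a)

/-- Pointwise coproduct. -/
def sum' (A B : Obj) : Obj := fun l => A l ⊕ B l

def sumMap {A A' B B' : Obj} (f : Hom A A') (g : Hom B B') :
    Hom (sum' A B) (sum' A' B') :=
  fun l s => Sum.map (f l) (g l) s

def inlH {A B : Obj} : Hom A (sum' A B) := fun _ a => Sum.inl a
def inrH {A B : Obj} : Hom B (sum' A B) := fun _ b => Sum.inr b

/-- Associator of the Day tensor. -/
def dayAssoc {A B C : Obj} : Hom (Day (Day A B) C) (Day A (Day B C)) :=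
  fun _ d =>
    ⟨d.a.l₁, d.a.l₂ ++ d.l₂, by rw [← List.append_assoc, d.a.eq, d.eq],
      d.a.a, ⟨d.a.l₂, d.l₂, rfl, d.a.b, d.b⟩⟩

/-- Inverse associator of the Day tensor. -/
def dayAssocInv {A B C : Obj} : Hom (Day A (Day B C)) (Day (Day A B) C) :=
  fun _ d =>
    ⟨d.l₁ ++ d.b.l₁, d.b.l₂, by rw [List.append_assoc, d.b.eq, d.eq],
      ⟨d.l₁, d.b.l₁, rfl, d.a, d.b.a⟩, d.b.b⟩

/-- Left unitor of the Day tensor. -/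
def dayLUnit {B : Obj} : Hom (Day Iobj B) B := fun l d =>
  (show d.l₂ = l by have h := d.eq; rw [d.a.down] at h; simpa using h) ▸ d.b

/-- The allocation monad T A = [R] ⊸_r (A ⊗ [R]). -/
def Talloc (A : Obj) : Obj := rhom Full (Day A Full)

def tallocMap {A B : Obj} (f : Hom A B) : Hom (Talloc A) (Talloc B) :=
  fun _ m l₂ u => dayMap f (idH Full) _ (m l₂ u)

/-- Unit of the allocation monad. -/
def tallocEta (A : Obj) : Hom A (Talloc A) :=
  fun l a l₂ _ => ⟨l, l₂, rfl, a, PUnit.unit⟩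

/-- Multiplication of the allocation monad. -/
def tallocMu (A : Obj) : Hom (Talloc (Talloc A)) (Talloc A) :=
  fun _ m l₂ u =>
    let d := m l₂ u
    d.eq ▸ (d.a d.l₂ d.b)

end LDay

open LDay

/- An object admitting even a plain morphism `E ⊗ X → X ⊗ E` for every `X` has no elements over
a non-empty list `h :: t`: swapping such an element past the point of the representable at
`[k]`, `k ≠ h`, would decompose `h :: t ++ [k]` as `[k] ++ _`, whose heads differ.
Conversely, if `E` lives only over `[]`, then `E ⊗ X` and `X ⊗ E` are both `E [] × X l`
at `l`, the swap is an isomorphism, and naturality and the hexagon hold on the nose. -/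

namespace LDay

def IsResourceFree (E : Obj) : Prop := ∀ l : List ℕ, l ≠ [] → IsEmpty (E l)

/-- The representable presheaf `y m`. -/
def Rep (m : List ℕ) : Obj := fun l => PLift (l = m)

theorem IsResourceFree.eq_nil {E : Obj} (hE : IsResourceFree E) {l : List ℕ} (e : E l) :
    l = [] := by
  by_contra hl
  exact (hE l hl).false e

theorem isResourceFree_iff_nonempty_hom_unit (E : Obj) :
    IsResourceFree E ↔ Nonempty (Hom E Iobj) :=
  ⟨fun hE => ⟨fun _ e => ⟨hE.eq_nil e⟩⟩, fun ⟨f⟩ l hl => ⟨fun e => hl (f l e).down⟩⟩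

theorem isEmpty_of_hom_day_swap {E : Obj} {h k : ℕ} (hk : k ≠ h) (t : List ℕ)
    (θ : Hom (Day E (Rep [k])) (Day (Rep [k]) E)) : IsEmpty (E (h :: t)) := by
  refine ⟨fun e => hk ?_⟩
  let d := θ _ ⟨h :: t, [k], rfl, e, ⟨rfl⟩⟩
  have hd : d.l₁ ++ d.l₂ = h :: t ++ [k] := d.eq
  rw [d.a.down] at hd
  simpa using congrArg List.head? hd

theorem isResourceFree_of_hom_day_swap {E : Obj} (θ : ∀ X : Obj, Hom (Day E X) (Day X E)) :
    IsResourceFree E := by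
  intro l hl
  obtain ⟨h, t, rfl⟩ := List.exists_cons_of_ne_nil hl
  exact isEmpty_of_hom_day_swap h.succ_ne_self t (θ _)

variable {E : Obj}

def IsResourceFree.swap (hE : IsResourceFree E) (X : Obj) : Hom (Day E X) (Day X E) :=
  fun _ d => ⟨d.l₂, d.l₁, by simpa [hE.eq_nil d.a] using d.eq, d.b, d.a⟩

def IsResourceFree.unswap (hE : IsResourceFree E) (X : Obj) : Hom (Day X E) (Day E X) :=
  fun _ d => ⟨d.l₂, d.l₁, by simpa [hE.eq_nil d.b] using d.eq, d.b, d.a⟩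

def IsResourceFree.braiding (hE : IsResourceFree E) (X : Obj) (l : List ℕ) :
    Day E X l ≃ Day X E l where
  toFun := hE.swap X l
  invFun := hE.unswap X l
  left_inv _ := rfl
  right_inv _ := rfl

theorem IsResourceFree.braiding_natural (hE : IsResourceFree E) (X Y : Obj) (f : Hom X Y)
    (l : List ℕ) (d : Day E X l) :
    hE.braiding Y l (dayMap (idH E) f l d) = dayMap f (idH E) l (hE.braiding X l d) :=
  rfl

theorem IsResourceFree.braiding_hexagon (hE : IsResourceFree E) (A B : Obj) :
    (fun l (d : Day E (Day A B) l) => (hE.braiding (Day A B) l d : Day (Day A B) E l))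
      = comp (dayAssocInv (A := E) (B := A) (C := B))
          (comp (dayMap (fun l x => hE.braiding A l x) (idH B))
            (comp dayAssoc
              (comp (dayMap (idH A) (fun l x => hE.braiding B l x))
                dayAssocInv))) := by
  funext l ⟨l₁, l₂, eq, a, ⟨bl₁, bl₂, beq, ba, bb⟩⟩
  subst beq eq
  rfl

end LDay

/-- in L = Set^{[R]}, for an object E the following are
    equivalent: (1) E lies in the Drinfeld center of L (it has a natural
    family of isomorphisms E ⊗ A ≅ A ⊗ E satisfying
    θ_{A⊗B} = (θ_A ⊗ id);(id ⊗ θ_B)); (2) E is resource-free; (3) there is a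
    morphism E → I. -/
theorem drinfeld_center_characterisation (E : Obj) :
    ((∃ θ : ∀ (X : Obj) (l : List ℕ), Day E X l ≃ Day X E l,
      -- naturality in X
      (∀ (X Y : Obj) (f : Hom X Y) (l : List ℕ) (d : Day E X l),
        θ Y l (dayMap (idH E) f l d) = dayMap f (idH E) l (θ X l d)) ∧
      -- the hexagon/multiplicativity condition of the Drinfeld center
      (∀ A B : Obj,
        (fun l (d : Day E (Day A B) l) => (θ (Day A B) l d : Day (Day A B) E l))
          = comp (dayAssocInv (A := E) (B := A) (C := B))
              (comp (dayMap (fun l x => θ A l x) (idH B))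
                (comp dayAssoc
                  (comp (dayMap (idH A) (fun l x => θ B l x))
                    dayAssocInv)))))
      ↔ (∀ l : List ℕ, l ≠ [] → IsEmpty (E l))) ∧
    ((∀ l : List ℕ, l ≠ [] → IsEmpty (E l)) ↔ Nonempty (Hom E Iobj)) := by
  refine ⟨⟨?_, fun hE => ?_⟩, isResourceFree_iff_nonempty_hom_unit E⟩
  · rintro ⟨θ, -, -⟩
    exact isResourceFree_of_hom_day_swap fun X l => θ X l
  · exact ⟨IsResourceFree.braiding hE, IsResourceFree.braiding_natural hE,
      IsResourceFree.braiding_hexagon hE⟩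
end

section
/- In L = Set^{[R]}, if E is a resource-free object (E(l) = ∅ for all non-empty l), then the monad T𝓔 = T(- ⊕ E), where T is the allocation monad, has a left strength: a natural family Γ ⊗ T(A ⊕ E) → T((Γ ⊗ A) ⊕ E) satisfying the strength laws. -/
open LDay

/-- The monad T(- ⊕ E) on L, T being the allocation monad. -/
def TE (E A : Obj) : Obj := Talloc (sum' A E)

def teMapP (E : Obj) {A B : Obj} (f : Hom A B) : Hom (TE E A) (TE E B) :=
  tallocMap (sumMap f (idH E))

def teEtaP (E A : Obj) : Hom A (TE E A) := comp inlH (tallocEta (sum' A E))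

/-- The distributive law (T X ⊕ E) ⟶ T (X ⊕ E). -/
def dlawP (E X : Obj) : Hom (sum' (Talloc X) E) (Talloc (sum' X E)) :=
  fun l s => match s with
  | Sum.inl t => tallocMap inlH l t
  | Sum.inr e => tallocEta (sum' X E) l (Sum.inr e)

def teMuP (E A : Obj) : Hom (TE E (TE E A)) (TE E A) :=
  comp (tallocMap (dlawP E (sum' A E)))
    (comp (tallocMu (sum' (sum' A E) E))
      (tallocMap (fun _ s => match s with
        | Sum.inl x => x
        | Sum.inr e => Sum.inr e)))

/-
Run on the remaining resources `l₃`, a computation `t : T(A ⊕ E)(l₂)` yields a value at a prefix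
`m₁` of `l₂ ++ l₃`. The strength pairs `γ : Γ(l₁)` with a value `a : A(m₁)` into
`(Γ ⊗ A)(l₁ ++ m₁)`. An exception `e : E(m₁)` cannot absorb `γ`, so it has to be re-emitted
unchanged at a prefix of `l₁ ++ l₂ ++ l₃`; this is possible because resource-freeness forces
`m₁ = []`. Every law then reduces to a case split on the value produced.
-/

namespace LDay

theorem DayT.full_ext {C : Obj} {L : List ℕ} (x y : DayT C Full L)
    (h₁ : x.l₁ = y.l₁) (ha : HEq x.a y.a) : x = y := by
  rcases x with ⟨x₁, x₂, xeq, xa, ⟨⟩⟩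
  rcases y with ⟨y₁, y₂, yeq, ya, ⟨⟩⟩
  dsimp only at h₁ ha
  subst h₁
  obtain rfl : x₂ = y₂ := List.append_cancel_left (xeq.trans yeq.symm)
  cases ha
  rfl

def DayT.reindex {C D : Obj} {L L' : List ℕ} (h : L = L') (x : DayT C D L) : DayT C D L' :=
  ⟨x.l₁, x.l₂, x.eq.trans h, x.a, x.b⟩

theorem DayT.cast_eq_reindex {C D : Obj} {L L' : List ℕ} (h : L = L') (x : DayT C D L) :
    h ▸ x = x.reindex h := by
  subst h
  rfl

theorem sum_inl_day_heq {X Y E : Obj} {k k' a b : List ℕ} (h : k = k')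
    (p : a ++ b = k) (p' : a ++ b = k') (x : X a) (y : Y b) :
    HEq (Sum.inl ⟨a, b, p, x, y⟩ : sum' (Day X Y) E k)
      (Sum.inl ⟨a, b, p', x, y⟩ : sum' (Day X Y) E k') := by
  subst h
  rfl

theorem talloc_hom_ext {X Y : Obj} {f g : Hom X (Talloc Y)}
    (h : ∀ l x l₃, f l x l₃ PUnit.unit = g l x l₃ PUnit.unit) : f = g := by
  funext l x l₃ _
  exact h l x l₃

end LDay

theorem tallocMu_apply {A : Obj} {l : List ℕ} (t : Talloc (Talloc A) l) (l₃ : List ℕ) :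
    tallocMu A l t l₃ PUnit.unit
      = ((t l₃ PUnit.unit).a _ (t l₃ PUnit.unit).b).reindex (t l₃ PUnit.unit).eq :=
  DayT.cast_eq_reindex _ _

def teJoin {E A : Obj} {L : List ℕ} :
    DayT (sum' (TE E A) E) Full L → DayT (sum' A E) Full L
  | ⟨_, m₂, meq, Sum.inl t, u⟩ => (t m₂ u).reindex meq
  | ⟨m₁, m₂, meq, Sum.inr e, u⟩ => ⟨m₁, m₂, meq, Sum.inr e, u⟩

theorem teMuP_apply (E A : Obj) (l : List ℕ) (t : TE E (TE E A) l) (l₃ : List ℕ) :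
    teMuP E A l t l₃ PUnit.unit = teJoin (t l₃ PUnit.unit) := by
  simp only [teMuP, comp, tallocMap, tallocMu_apply]
  generalize_proofs h
  generalize t l₃ PUnit.unit = m at h ⊢
  rcases m with ⟨_, _, _, _ | _, _⟩ <;> rfl

theorem eq_nil_of_resourceFree {E : Obj} (hE : ∀ l : List ℕ, l ≠ [] → IsEmpty (E l))
    {l : List ℕ} (e : E l) : l = [] :=
  by_contra fun h => (hE l h).false e

section Strength

variable {E : Obj} (hE : ∀ l : List ℕ, l ≠ [] → IsEmpty (E l))

def dayStrength {Γ A : Obj} {l₁ L L' : List ℕ} (h : l₁ ++ L = L') (γ : Γ l₁) :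
    DayT (sum' A E) Full L → DayT (sum' (Day Γ A) E) Full L'
  | ⟨m₁, m₂, meq, Sum.inl a, _⟩ =>
      ⟨l₁ ++ m₁, m₂, by rw [List.append_assoc, meq, h], Sum.inl ⟨l₁, m₁, rfl, γ, a⟩,
        PUnit.unit⟩
  | ⟨_, _, _, Sum.inr e, _⟩ =>
      ⟨[], L', rfl, Sum.inr (eq_nil_of_resourceFree hE e ▸ e), PUnit.unit⟩

def teStrength (Γ A : Obj) : Hom (Day Γ (TE E A)) (TE E (Day Γ A)) :=
  fun _ d l₃ u => dayStrength hE (by rw [← List.append_assoc, d.eq]) d.a (d.b l₃ u)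

theorem dayStrength_natural {Γ Γ' A A' : Obj} (f : Hom Γ Γ') (g : Hom A A')
    {l₁ L L' : List ℕ} (h : l₁ ++ L = L') (γ : Γ l₁) (m : DayT (sum' A E) Full L) :
    dayStrength hE h (f l₁ γ) (dayMap (sumMap g (idH E)) (idH Full) L m)
      = dayMap (sumMap (dayMap f g) (idH E)) (idH Full) L' (dayStrength hE h γ m) := by
  rcases m with ⟨m₁, m₂, meq, a | e, _⟩
  · rfl
  · obtain rfl := eq_nil_of_resourceFree hE e
    rfl

theorem teStrength_natural (Γ Γ' A A' : Obj) (f : Hom Γ Γ') (g : Hom A A') :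
    comp (dayMap f (teMapP E g)) (teStrength hE Γ' A')
      = comp (teStrength hE Γ A) (teMapP E (dayMap f g)) :=
  talloc_hom_ext fun _ d l₃ => dayStrength_natural hE f g _ d.a (d.b l₃ PUnit.unit)

theorem teStrength_unit (Γ A : Obj) :
    comp (dayMap (idH Γ) (teEtaP E A)) (teStrength hE Γ A) = teEtaP E (Day Γ A) :=
  talloc_hom_ext fun _ ⟨_, _, heq, _, _⟩ _ => by subst heq; rfl

theorem dayStrength_leftUnitor {A : Obj} {L : List ℕ} (h : [] ++ L = L)
    (m : DayT (sum' A E) Full L) :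
    dayMap (sumMap dayLUnit (idH E)) (idH Full) L (dayStrength hE h (Γ := Iobj) ⟨rfl⟩ m)
      = m := by
  rcases m with ⟨m₁, m₂, meq, a | e, ⟨⟩⟩
  · rfl
  · obtain rfl := eq_nil_of_resourceFree hE e
    subst meq
    rfl

theorem teStrength_leftUnitor (A : Obj) :
    comp (teStrength hE Iobj A) (teMapP E dayLUnit) = dayLUnit (B := TE E A) :=
  talloc_hom_ext fun _ ⟨_, _, heq, ⟨hnil⟩, t⟩ l₃ => by
    subst hnil heq
    exact dayStrength_leftUnitor hE _ (t l₃ PUnit.unit)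

theorem dayStrength_assoc {Γ Δ A : Obj} {g₁ g₂ L K L' : List ℕ} (γ : Γ g₁) (δ : Δ g₂)
    (h : (g₁ ++ g₂) ++ L = L') (h₂ : g₂ ++ L = K) (h₁ : g₁ ++ K = L')
    (m : DayT (sum' A E) Full L) :
    dayMap (sumMap dayAssoc (idH E)) (idH Full) L' (dayStrength hE h ⟨g₁, g₂, rfl, γ, δ⟩ m)
      = dayStrength hE h₁ γ (dayStrength hE h₂ δ m) := by
  rcases m with ⟨m₁, m₂, meq, a | e, ⟨⟩⟩
  · exact DayT.full_ext _ _ (List.append_assoc g₁ g₂ m₁)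
      (sum_inl_day_heq (List.append_assoc g₁ g₂ m₁) _ _ _ _)
  · obtain rfl := eq_nil_of_resourceFree hE e
    rfl

theorem teStrength_assoc (Γ Δ A : Obj) :
    comp (teStrength hE (Day Γ Δ) A) (teMapP E dayAssoc)
      = comp dayAssoc
          (comp (dayMap (idH Γ) (teStrength hE Δ A)) (teStrength hE Γ (Day Δ A))) :=
  talloc_hom_ext fun _ ⟨_, _, heq, ⟨_, _, geq, γ, δ⟩, t⟩ l₃ => by
    subst geq heq
    exact dayStrength_assoc hE γ δ _ (List.append_assoc _ _ _).symm (by simp)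
      (t l₃ PUnit.unit)

theorem dayStrength_reindex {Γ A : Obj} {l₁ K K' L L' : List ℕ} (γ : Γ l₁)
    (h : l₁ ++ L = L') (hK : l₁ ++ K = K') (e : K = L) (e' : K' = L')
    (x : DayT (sum' A E) Full K) :
    dayStrength hE h γ (x.reindex e) = (dayStrength hE hK γ x).reindex e' := by
  subst e'
  rcases x with ⟨x₁, x₂, xeq, a | e, _⟩
  · rfl
  · obtain rfl := eq_nil_of_resourceFree hE e
    rfl

theorem dayStrength_teJoin {Γ A : Obj} {l₁ L L' : List ℕ} (h : l₁ ++ L = L') (γ : Γ l₁)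
    (m : DayT (sum' (TE E A) E) Full L) :
    dayStrength hE h γ (teJoin m)
      = teJoin (dayMap (sumMap (teStrength hE Γ A) (idH E)) (idH Full) L'
          (dayStrength hE h γ m)) := by
  rcases m with ⟨m₁, m₂, meq, t | e, ⟨⟩⟩
  · exact dayStrength_reindex hE γ h (K' := l₁ ++ m₁ ++ m₂) (List.append_assoc _ _ _).symm
      meq (by rw [List.append_assoc, meq, h]) (t m₂ PUnit.unit)
  · obtain rfl := eq_nil_of_resourceFree hE e
    rfl

theorem teStrength_mu (Γ A : Obj) :
    comp (dayMap (idH Γ) (teMuP E A)) (teStrength hE Γ A)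
      = comp (teStrength hE Γ (TE E A))
          (comp (teMapP E (teStrength hE Γ A)) (teMuP E (Day Γ A))) :=
  talloc_hom_ext fun l d l₃ =>
    (congrArg (dayStrength hE _ d.a) (teMuP_apply E A _ d.b l₃)).trans <|
      (dayStrength_teJoin hE _ d.a (d.b l₃ PUnit.unit)).trans
        (teMuP_apply E (Day Γ A) l
          (teMapP E (teStrength hE Γ A) l (teStrength hE Γ (TE E A) l d)) l₃).symm

end Strength

/-- in L = Set^{[R]}, if E is resource-free (central) then the
    monad T(- ⊕ E) has a left strength Γ ⊗ T(A ⊕ E) ⟶ T((Γ ⊗ A) ⊕ E),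
    natural and satisfying the strength laws. -/
theorem te_left_strength_of_resource_free (E : Obj)
    (hE : ∀ l : List ℕ, l ≠ [] → IsEmpty (E l)) :
    ∃ σ : ∀ Γ A : Obj, Hom (Day Γ (TE E A)) (TE E (Day Γ A)),
      -- naturality in Γ and in A
      (∀ (Γ Γ' A A' : Obj) (f : Hom Γ Γ') (g : Hom A A'),
        comp (dayMap f (teMapP E g)) (σ Γ' A')
          = comp (σ Γ A) (teMapP E (dayMap f g))) ∧
      -- compatibility with the unit of T(- ⊕ E)
      (∀ Γ A : Obj,
        comp (dayMap (idH Γ) (teEtaP E A)) (σ Γ A) = teEtaP E (Day Γ A)) ∧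
      -- compatibility with the multiplication of T(- ⊕ E)
      (∀ Γ A : Obj,
        comp (dayMap (idH Γ) (teMuP E A)) (σ Γ A)
          = comp (σ Γ (TE E A)) (comp (teMapP E (σ Γ A)) (teMuP E (Day Γ A)))) ∧
      -- compatibility with the left unitor
      (∀ A : Obj,
        comp (σ Iobj A) (teMapP E dayLUnit) = dayLUnit (B := TE E A)) ∧
      -- compatibility with the associator
      (∀ Γ Δ A : Obj,
        comp (σ (Day Γ Δ) A) (teMapP E dayAssoc)
          = comp dayAssoc (comp (dayMap (idH Γ) (σ Δ A)) (σ Γ (Day Δ A)))) :=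
  ⟨teStrength hE, teStrength_natural hE, teStrength_unit hE, teStrength_mu hE,
    teStrength_leftUnitor hE, teStrength_assoc hE⟩
end
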